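/- arXiv:1209.4656 — 4 statements merged into one kernel-verified Lean document; each statement's English description precedes it below -/
import Mathlib

section
/- The matrix A := G₁·G₂²·G₁⁻¹ has multiplicative order 9 and the matrix B := G₁·G₂⁻²·G₁ has multiplicative order 3. -/
open Complex Matrix

/-- `t = (√2/2)·e^{2iπ/3}` -/
noncomputable def t : ℂ := ((Real.sqrt 2 : ℂ) / 2) * Complex.exp (2 * (Real.pi : ℂ) * Complex.I / 3)

/-- `G₁ = e^{iπ/9}·diag(2t̄², 2t², −2t̄²)` -/
noncomputable def G₁ : Matrix (Fin 3) (Fin 3) ℂ :=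
  Complex.exp ((Real.pi : ℂ) * Complex.I / 9) •
    Matrix.diagonal ![2 * (starRingEnd ℂ t) ^ 2, 2 * t ^ 2, -(2 * (starRingEnd ℂ t) ^ 2)]

/-- `G₂ = e^{iπ/9}·[[t², t, −t²], [t, 0, t], [−t², t, t²]]` -/
noncomputable def G₂ : Matrix (Fin 3) (Fin 3) ℂ :=
  Complex.exp ((Real.pi : ℂ) * Complex.I / 9) •
    !![t ^ 2, t, -t ^ 2; t, 0, t; -t ^ 2, t, t ^ 2]

lemma mA (x y : ℂ) (hx : x ^ 9 = -1) (hy : y ^ 2 = 2) :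
    !![(-1/2) * x ^ 4, (1/2) * x ^ 7 * y ^ 1, (1/2) * x ^ 4; (1/2) * x ^ 7 * y ^ 1, 0, (1/2) * x ^ 7 * y ^ 1; (1/2) * x ^ 4, (1/2) * x ^ 7 * y ^ 1, (-1/2) * x ^ 4] *
    !![(-1/2) * x ^ 4, (1/2) * x ^ 7 * y ^ 1, (1/2) * x ^ 4; (1/2) * x ^ 7 * y ^ 1, 0, (1/2) * x ^ 7 * y ^ 1; (1/2) * x ^ 4, (1/2) * x ^ 7 * y ^ 1, (-1/2) * x ^ 4] =
    !![(-1/2) * x ^ 5 + (1/2) * x ^ 8, 0, (-1/2) * x ^ 5 + (-1/2) * x ^ 8; 0, (-1) * x ^ 5, 0; (-1/2) * x ^ 5 + (-1/2) * x ^ 8, 0, (-1/2) * x ^ 5 + (1/2) * x ^ 8] := by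
  ext i j
  fin_cases i <;> fin_cases j <;>
    simp [Matrix.mul_apply, Fin.sum_univ_three, Matrix.smul_apply, smul_eq_mul, Matrix.vecHead, Matrix.vecTail]
  · first
    | linear_combination ((1/2) * x ^ 5) * hx + ((1/4) * x ^ 14) * hy
    | linear_combination -(((1/2) * x ^ 5) * hx + ((1/4) * x ^ 14) * hy)
  · ring
  · first
    | linear_combination ((1/2) * x ^ 5) * hx + ((1/4) * x ^ 14) * hy
    | linear_combination -(((1/2) * x ^ 5) * hx + ((1/4) * x ^ 14) * hy)
  · ring
  · first
    | linear_combination (x ^ 5) * hx + ((1/2) * x ^ 14) * hy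
    | linear_combination -((x ^ 5) * hx + ((1/2) * x ^ 14) * hy)
  · ring
  · first
    | linear_combination ((1/2) * x ^ 5) * hx + ((1/4) * x ^ 14) * hy
    | linear_combination -(((1/2) * x ^ 5) * hx + ((1/4) * x ^ 14) * hy)
  · ring
  · first
    | linear_combination ((1/2) * x ^ 5) * hx + ((1/4) * x ^ 14) * hy
    | linear_combination -(((1/2) * x ^ 5) * hx + ((1/4) * x ^ 14) * hy)
lemma mB (x y : ℂ) (hx : x ^ 9 = -1) (hy : y ^ 2 = 2) :
    !![(-1/2) * x ^ 5 + (1/2) * x ^ 8, 0, (-1/2) * x ^ 5 + (-1/2) * x ^ 8; 0, (-1) * x ^ 5, 0; (-1/2) * x ^ 5 + (-1/2) * x ^ 8, 0, (-1/2) * x ^ 5 + (1/2) * x ^ 8] *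
    !![(-1/2) * x ^ 5 + (1/2) * x ^ 8, 0, (-1/2) * x ^ 5 + (-1/2) * x ^ 8; 0, (-1) * x ^ 5, 0; (-1/2) * x ^ 5 + (-1/2) * x ^ 8, 0, (-1/2) * x ^ 5 + (1/2) * x ^ 8] =
    !![(-1/2) * x ^ 1 + (-1/2) * x ^ 7, 0, (-1/2) * x ^ 1 + (1/2) * x ^ 7; 0, (-1) * x ^ 1, 0; (-1/2) * x ^ 1 + (1/2) * x ^ 7, 0, (-1/2) * x ^ 1 + (-1/2) * x ^ 7] := by
  ext i j
  fin_cases i <;> fin_cases j <;>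
    simp [Matrix.mul_apply, Fin.sum_univ_three, Matrix.smul_apply, smul_eq_mul, Matrix.vecHead, Matrix.vecTail]
  · first
    | linear_combination ((1/2) * x ^ 1 + (1/2) * x ^ 7) * hx
    | linear_combination -(((1/2) * x ^ 1 + (1/2) * x ^ 7) * hx)
  · first
    | linear_combination ((1/2) * x ^ 1 + (-1/2) * x ^ 7) * hx
    | linear_combination -(((1/2) * x ^ 1 + (-1/2) * x ^ 7) * hx)
  · first
    | linear_combination (x ^ 1) * hx
    | linear_combination -((x ^ 1) * hx)
  · first
    | linear_combination ((1/2) * x ^ 1 + (-1/2) * x ^ 7) * hx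
    | linear_combination -(((1/2) * x ^ 1 + (-1/2) * x ^ 7) * hx)
  · first
    | linear_combination ((1/2) * x ^ 1 + (1/2) * x ^ 7) * hx
    | linear_combination -(((1/2) * x ^ 1 + (1/2) * x ^ 7) * hx)
lemma mC (x y : ℂ) (hx : x ^ 9 = -1) (hy : y ^ 2 = 2) :
    !![(-1/2) * x ^ 1 + (-1/2) * x ^ 7, 0, (-1/2) * x ^ 1 + (1/2) * x ^ 7; 0, (-1) * x ^ 1, 0; (-1/2) * x ^ 1 + (1/2) * x ^ 7, 0, (-1/2) * x ^ 1 + (-1/2) * x ^ 7] *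
    !![(-1/2) * x ^ 5 + (1/2) * x ^ 8, 0, (-1/2) * x ^ 5 + (-1/2) * x ^ 8; 0, (-1) * x ^ 5, 0; (-1/2) * x ^ 5 + (-1/2) * x ^ 8, 0, (-1/2) * x ^ 5 + (1/2) * x ^ 8] =
    !![x ^ 6, 0, 0; 0, x ^ 6, 0; 0, 0, x ^ 6] := by
  ext i j
  fin_cases i <;> fin_cases j <;>
    simp [Matrix.mul_apply, Fin.sum_univ_three, Matrix.smul_apply, smul_eq_mul, Matrix.vecHead, Matrix.vecTail]
  · first
    | linear_combination ((-1/2) * x ^ 6) * hx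
    | linear_combination -(((-1/2) * x ^ 6) * hx)
  · first
    | linear_combination ((1/2) * x ^ 6) * hx
    | linear_combination -(((1/2) * x ^ 6) * hx)
  · ring
  · first
    | linear_combination ((1/2) * x ^ 6) * hx
    | linear_combination -(((1/2) * x ^ 6) * hx)
  · first
    | linear_combination ((-1/2) * x ^ 6) * hx
    | linear_combination -(((-1/2) * x ^ 6) * hx)
lemma mD (x y : ℂ) (hx : x ^ 9 = -1) (hy : y ^ 2 = 2) :
    !![(-1/2) * x ^ 4, (1/2) * x ^ 7 * y ^ 1, (1/2) * x ^ 4; (1/2) * x ^ 7 * y ^ 1, 0, (1/2) * x ^ 7 * y ^ 1; (1/2) * x ^ 4, (1/2) * x ^ 7 * y ^ 1, (-1/2) * x ^ 4] *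
    !![(1/2) * x ^ 5, (-1/2) * x ^ 2 * y ^ 1, (-1/2) * x ^ 5; (-1/2) * x ^ 2 * y ^ 1, 0, (-1/2) * x ^ 2 * y ^ 1; (-1/2) * x ^ 5, (-1/2) * x ^ 2 * y ^ 1, (1/2) * x ^ 5] =
    !![1, 0, 0; 0, 1, 0; 0, 0, 1] := by
  ext i j
  fin_cases i <;> fin_cases j <;>
    simp [Matrix.mul_apply, Fin.sum_univ_three, Matrix.smul_apply, smul_eq_mul, Matrix.vecHead, Matrix.vecTail]
  · first
    | linear_combination ((-1)) * hx + ((-1/4) * x ^ 9) * hy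
    | linear_combination -(((-1)) * hx + ((-1/4) * x ^ 9) * hy)
  · ring
  · first
    | linear_combination ((-1/4) * x ^ 9) * hy
    | linear_combination -(((-1/4) * x ^ 9) * hy)
  · ring
  · first
    | linear_combination ((-1)) * hx + ((-1/2) * x ^ 9) * hy
    | linear_combination -(((-1)) * hx + ((-1/2) * x ^ 9) * hy)
  · ring
  · first
    | linear_combination ((-1/4) * x ^ 9) * hy
    | linear_combination -(((-1/4) * x ^ 9) * hy)
  · ring
  · first
    | linear_combination ((-1)) * hx + ((-1/4) * x ^ 9) * hy
    | linear_combination -(((-1)) * hx + ((-1/4) * x ^ 9) * hy)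
lemma mE (x y : ℂ) (hx : x ^ 9 = -1) (hy : y ^ 2 = 2) :
    !![(1/2) * x ^ 5, (-1/2) * x ^ 2 * y ^ 1, (-1/2) * x ^ 5; (-1/2) * x ^ 2 * y ^ 1, 0, (-1/2) * x ^ 2 * y ^ 1; (-1/2) * x ^ 5, (-1/2) * x ^ 2 * y ^ 1, (1/2) * x ^ 5] *
    !![(1/2) * x ^ 5, (-1/2) * x ^ 2 * y ^ 1, (-1/2) * x ^ 5; (-1/2) * x ^ 2 * y ^ 1, 0, (-1/2) * x ^ 2 * y ^ 1; (-1/2) * x ^ 5, (-1/2) * x ^ 2 * y ^ 1, (1/2) * x ^ 5] =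
    !![(-1/2) * x ^ 1 + (1/2) * x ^ 4, 0, (1/2) * x ^ 1 + (1/2) * x ^ 4; 0, x ^ 4, 0; (1/2) * x ^ 1 + (1/2) * x ^ 4, 0, (-1/2) * x ^ 1 + (1/2) * x ^ 4] := by
  ext i j
  fin_cases i <;> fin_cases j <;>
    simp [Matrix.mul_apply, Fin.sum_univ_three, Matrix.smul_apply, smul_eq_mul, Matrix.vecHead, Matrix.vecTail]
  · first
    | linear_combination ((1/2) * x ^ 1) * hx + ((1/4) * x ^ 4) * hy
    | linear_combination -(((1/2) * x ^ 1) * hx + ((1/4) * x ^ 4) * hy)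
  · ring
  · first
    | linear_combination ((-1/2) * x ^ 1) * hx + ((1/4) * x ^ 4) * hy
    | linear_combination -(((-1/2) * x ^ 1) * hx + ((1/4) * x ^ 4) * hy)
  · ring
  · first
    | linear_combination ((1/2) * x ^ 4) * hy
    | linear_combination -(((1/2) * x ^ 4) * hy)
  · ring
  · first
    | linear_combination ((-1/2) * x ^ 1) * hx + ((1/4) * x ^ 4) * hy
    | linear_combination -(((-1/2) * x ^ 1) * hx + ((1/4) * x ^ 4) * hy)
  · ring
  · first
    | linear_combination ((1/2) * x ^ 1) * hx + ((1/4) * x ^ 4) * hy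
    | linear_combination -(((1/2) * x ^ 1) * hx + ((1/4) * x ^ 4) * hy)
lemma mF (x y : ℂ) (hx : x ^ 9 = -1) (hy : y ^ 2 = 2) :
    !![x ^ 7, 0, 0; 0, (-1) * x ^ 4, 0; 0, 0, (-1) * x ^ 7] *
    !![(-1/2) * x ^ 1 + (1/2) * x ^ 4, 0, (1/2) * x ^ 1 + (1/2) * x ^ 4; 0, x ^ 4, 0; (1/2) * x ^ 1 + (1/2) * x ^ 4, 0, (-1/2) * x ^ 1 + (1/2) * x ^ 4] =
    !![(-1/2) * x ^ 2 + (-1/2) * x ^ 8, 0, (-1/2) * x ^ 2 + (1/2) * x ^ 8; 0, (-1) * x ^ 8, 0; (1/2) * x ^ 2 + (-1/2) * x ^ 8, 0, (1/2) * x ^ 2 + (1/2) * x ^ 8] := by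
  ext i j
  fin_cases i <;> fin_cases j <;>
    simp [Matrix.mul_apply, Fin.sum_univ_three, Matrix.smul_apply, smul_eq_mul, Matrix.vecHead, Matrix.vecTail]
  · first
    | linear_combination ((1/2) * x ^ 2) * hx
    | linear_combination -(((1/2) * x ^ 2) * hx)
  · first
    | linear_combination ((1/2) * x ^ 2) * hx
    | linear_combination -(((1/2) * x ^ 2) * hx)
  · ring
  · first
    | linear_combination ((-1/2) * x ^ 2) * hx
    | linear_combination -(((-1/2) * x ^ 2) * hx)
  · first
    | linear_combination ((-1/2) * x ^ 2) * hx
    | linear_combination -(((-1/2) * x ^ 2) * hx)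
lemma mG (x y : ℂ) (hx : x ^ 9 = -1) (hy : y ^ 2 = 2) :
    !![(-1/2) * x ^ 2 + (-1/2) * x ^ 8, 0, (-1/2) * x ^ 2 + (1/2) * x ^ 8; 0, (-1) * x ^ 8, 0; (1/2) * x ^ 2 + (-1/2) * x ^ 8, 0, (1/2) * x ^ 2 + (1/2) * x ^ 8] *
    !![x ^ 7, 0, 0; 0, (-1) * x ^ 4, 0; 0, 0, (-1) * x ^ 7] =
    !![(1/2) + (1/2) * x ^ 6, 0, (-1/2) + (1/2) * x ^ 6; 0, (-1) * x ^ 3, 0; (-1/2) + (1/2) * x ^ 6, 0, (1/2) + (1/2) * x ^ 6] := by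
  ext i j
  fin_cases i <;> fin_cases j <;>
    simp [Matrix.mul_apply, Fin.sum_univ_three, Matrix.smul_apply, smul_eq_mul, Matrix.vecHead, Matrix.vecTail]
  · first
    | linear_combination ((-1/2) + (-1/2) * x ^ 6) * hx
    | linear_combination -(((-1/2) + (-1/2) * x ^ 6) * hx)
  · first
    | linear_combination ((1/2) + (-1/2) * x ^ 6) * hx
    | linear_combination -(((1/2) + (-1/2) * x ^ 6) * hx)
  · first
    | linear_combination (x ^ 3) * hx
    | linear_combination -((x ^ 3) * hx)
  · first
    | linear_combination ((1/2) + (-1/2) * x ^ 6) * hx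
    | linear_combination -(((1/2) + (-1/2) * x ^ 6) * hx)
  · first
    | linear_combination ((-1/2) + (-1/2) * x ^ 6) * hx
    | linear_combination -(((-1/2) + (-1/2) * x ^ 6) * hx)
lemma mH (x y : ℂ) (hx : x ^ 9 = -1) (hy : y ^ 2 = 2) :
    !![(1/2) + (1/2) * x ^ 6, 0, (-1/2) + (1/2) * x ^ 6; 0, (-1) * x ^ 3, 0; (-1/2) + (1/2) * x ^ 6, 0, (1/2) + (1/2) * x ^ 6] *
    !![(1/2) + (1/2) * x ^ 6, 0, (-1/2) + (1/2) * x ^ 6; 0, (-1) * x ^ 3, 0; (-1/2) + (1/2) * x ^ 6, 0, (1/2) + (1/2) * x ^ 6] =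
    !![(1/2) + (-1/2) * x ^ 3, 0, (-1/2) + (-1/2) * x ^ 3; 0, x ^ 6, 0; (-1/2) + (-1/2) * x ^ 3, 0, (1/2) + (-1/2) * x ^ 3] := by
  ext i j
  fin_cases i <;> fin_cases j <;>
    simp [Matrix.mul_apply, Fin.sum_univ_three, Matrix.smul_apply, smul_eq_mul, Matrix.vecHead, Matrix.vecTail]
  · first
    | linear_combination ((1/2) * x ^ 3) * hx
    | linear_combination -(((1/2) * x ^ 3) * hx)
  · first
    | linear_combination ((1/2) * x ^ 3) * hx
    | linear_combination -(((1/2) * x ^ 3) * hx)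
  · ring
  · first
    | linear_combination ((1/2) * x ^ 3) * hx
    | linear_combination -(((1/2) * x ^ 3) * hx)
  · first
    | linear_combination ((1/2) * x ^ 3) * hx
    | linear_combination -(((1/2) * x ^ 3) * hx)
lemma mI (x y : ℂ) (hx : x ^ 9 = -1) (hy : y ^ 2 = 2) :
    !![(1/2) + (-1/2) * x ^ 3, 0, (-1/2) + (-1/2) * x ^ 3; 0, x ^ 6, 0; (-1/2) + (-1/2) * x ^ 3, 0, (1/2) + (-1/2) * x ^ 3] *
    !![(1/2) + (1/2) * x ^ 6, 0, (-1/2) + (1/2) * x ^ 6; 0, (-1) * x ^ 3, 0; (-1/2) + (1/2) * x ^ 6, 0, (1/2) + (1/2) * x ^ 6] =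
    !![1, 0, 0; 0, 1, 0; 0, 0, 1] := by
  ext i j
  fin_cases i <;> fin_cases j <;>
    simp [Matrix.mul_apply, Fin.sum_univ_three, Matrix.smul_apply, smul_eq_mul, Matrix.vecHead, Matrix.vecTail]
  · first
    | linear_combination ((-1/2)) * hx
    | linear_combination -(((-1/2)) * hx)
  · first
    | linear_combination ((-1/2)) * hx
    | linear_combination -(((-1/2)) * hx)
  · first
    | linear_combination ((-1)) * hx
    | linear_combination -(((-1)) * hx)
  · first
    | linear_combination ((-1/2)) * hx
    | linear_combination -(((-1/2)) * hx)
  · first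
    | linear_combination ((-1/2)) * hx
    | linear_combination -(((-1/2)) * hx)

lemma diag3 {α : Type*} [Zero α] (a b c : α) :
    Matrix.diagonal ![a,b,c] = !![a,0,0;0,b,0;0,0,c] := by
  ext i j
  fin_cases i <;> fin_cases j <;> simp [Matrix.diagonal, Matrix.vecHead, Matrix.vecTail]

lemma smul3 (c : ℂ) : c • (1 : Matrix (Fin 3) (Fin 3) ℂ) = !![c,0,0;0,c,0;0,0,c] := by
  rw [Matrix.one_fin_three]
  ext i j
  fin_cases i <;> fin_cases j <;> simp [Matrix.vecHead, Matrix.vecTail]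

noncomputable def xx : ℂ := Complex.exp ((Real.pi : ℂ) * Complex.I / 9)
noncomputable def yy : ℂ := (Real.sqrt 2 : ℂ)

lemma hxx : xx ^ 9 = -1 := by
  unfold xx
  rw [← Complex.exp_nat_mul,
    show ((9:ℕ):ℂ) * ((Real.pi : ℂ) * Complex.I / 9) = (Real.pi : ℂ) * Complex.I by
      push_cast; ring,
    Complex.exp_pi_mul_I]

lemma hyy : yy ^ 2 = 2 := by
  unfold yy
  norm_cast
  exact Real.sq_sqrt (by norm_num)

lemma hxx6 : xx ^ 6 ≠ 1 := by
  have him : (xx ^ 6).im = Real.sin (2 * Real.pi / 3) := by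
    unfold xx
    rw [← Complex.exp_nat_mul,
      show ((6:ℕ):ℂ) * ((Real.pi : ℂ) * Complex.I / 9)
          = ((2 * Real.pi / 3 : ℝ) : ℂ) * Complex.I by push_cast; ring,
      Complex.exp_ofReal_mul_I_im]
  intro h
  rw [h, Complex.one_im] at him
  have hpos : 0 < Real.sin (2 * Real.pi / 3) :=
    Real.sin_pos_of_pos_of_lt_pi (by positivity) (by linarith [Real.pi_pos])
  linarith [him ▸ hpos]

lemma hw : Complex.exp (2 * (Real.pi : ℂ) * Complex.I / 3) = xx ^ 6 := by
  unfold xx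
  rw [← Complex.exp_nat_mul]
  congr 1
  push_cast
  ring

lemma ht : t = yy / 2 * xx ^ 6 := by
  unfold t yy
  rw [hw]

lemma hexpneg : Complex.exp (-(2 * (Real.pi : ℂ) * Complex.I / 3)) = -(xx ^ 3) := by
  have hmul : Complex.exp (2 * (Real.pi : ℂ) * Complex.I / 3) *
      Complex.exp (-(2 * (Real.pi : ℂ) * Complex.I / 3)) = 1 := by
    rw [← Complex.exp_add, add_neg_cancel, Complex.exp_zero]
  apply mul_left_cancel₀ (Complex.exp_ne_zero (2 * (Real.pi : ℂ) * Complex.I / 3))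
  rw [hmul, hw]
  linear_combination hxx

lemma harg : (starRingEnd ℂ) (2 * (Real.pi : ℂ) * Complex.I / 3)
    = -(2 * (Real.pi : ℂ) * Complex.I / 3) := by
  have h : (2 * (Real.pi : ℂ) * Complex.I / 3) = ((2 * Real.pi / 3 : ℝ) : ℂ) * Complex.I := by
    push_cast; ring
  rw [h, _root_.map_mul, Complex.conj_I, Complex.conj_ofReal]
  ring

lemma hct : (starRingEnd ℂ) t = -(yy / 2 * xx ^ 3) := by
  unfold t yy
  rw [_root_.map_mul, map_div₀, Complex.conj_ofReal, ← Complex.exp_conj, harg, hexpneg,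
    show (starRingEnd ℂ) (2:ℂ) = 2 from map_ofNat _ 2]
  ring

lemma hxdef : Complex.exp ((Real.pi : ℂ) * Complex.I / 9) = xx := rfl

lemma hG2e : G₂ = !![(-1/2) * xx ^ 4, (1/2) * xx ^ 7 * yy ^ 1, (1/2) * xx ^ 4; (1/2) * xx ^ 7 * yy ^ 1, 0, (1/2) * xx ^ 7 * yy ^ 1; (1/2) * xx ^ 4, (1/2) * xx ^ 7 * yy ^ 1, (-1/2) * xx ^ 4] := by
  unfold G₂
  rw [ht, hxdef]
  have hx := hxx
  have hy := hyy
  ext i j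
  fin_cases i <;> fin_cases j <;>
    simp [Matrix.mul_apply, Fin.sum_univ_three, Matrix.smul_apply, smul_eq_mul, Matrix.vecHead, Matrix.vecTail]
  · first
    | linear_combination ((1/2) * xx ^ 4) * hx + ((1/4) * xx ^ 13) * hy
    | linear_combination -(((1/2) * xx ^ 4) * hx + ((1/4) * xx ^ 13) * hy)
  · ring
  · first
    | linear_combination ((-1/2) * xx ^ 4) * hx + ((-1/4) * xx ^ 13) * hy
    | linear_combination -(((-1/2) * xx ^ 4) * hx + ((-1/4) * xx ^ 13) * hy)
  · ring
  · ring
  · first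
    | linear_combination ((-1/2) * xx ^ 4) * hx + ((-1/4) * xx ^ 13) * hy
    | linear_combination -(((-1/2) * xx ^ 4) * hx + ((-1/4) * xx ^ 13) * hy)
  · ring
  · first
    | linear_combination ((1/2) * xx ^ 4) * hx + ((1/4) * xx ^ 13) * hy
    | linear_combination -(((1/2) * xx ^ 4) * hx + ((1/4) * xx ^ 13) * hy)

lemma hG1e : G₁ = !![xx ^ 7, 0, 0; 0, (-1) * xx ^ 4, 0; 0, 0, (-1) * xx ^ 7] := by
  unfold G₁
  rw [hct, ht, hxdef, diag3]
  have hx := hxx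
  have hy := hyy
  ext i j
  fin_cases i <;> fin_cases j <;>
    simp [Matrix.mul_apply, Fin.sum_univ_three, Matrix.smul_apply, smul_eq_mul, Matrix.vecHead, Matrix.vecTail]
  · first
    | linear_combination ((1/2) * xx ^ 7) * hy
    | linear_combination -(((1/2) * xx ^ 7) * hy)
  · first
    | linear_combination (xx ^ 4) * hx + ((1/2) * xx ^ 13) * hy
    | linear_combination -((xx ^ 4) * hx + ((1/2) * xx ^ 13) * hy)
  · first
    | linear_combination ((-1/2) * xx ^ 7) * hy
    | linear_combination -(((-1/2) * xx ^ 7) * hy)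

theorem stmt8 (g₁ g₂ : GL (Fin 3) ℂ)
    (hg₁ : (g₁ : Matrix (Fin 3) (Fin 3) ℂ) = G₁)
    (hg₂ : (g₂ : Matrix (Fin 3) (Fin 3) ℂ) = G₂) :
    orderOf (g₁ * g₂ ^ 2 * g₁⁻¹) = 9 ∧ orderOf (g₁ * g₂⁻¹ ^ 2 * g₁) = 3 := by
  haveI : Fact (Nat.Prime 3) := ⟨by norm_num⟩
  have hx := hxx
  have hy := hyy
  have h2 : (g₂ : Matrix (Fin 3) (Fin 3) ℂ) ^ 2 = !![(-1/2) * xx ^ 5 + (1/2) * xx ^ 8, 0, (-1/2) * xx ^ 5 + (-1/2) * xx ^ 8; 0, (-1) * xx ^ 5, 0; (-1/2) * xx ^ 5 + (-1/2) * xx ^ 8, 0, (-1/2) * xx ^ 5 + (1/2) * xx ^ 8] := by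
    rw [sq, hg₂, hG2e]
    exact mA xx yy hx hy
  have h6 : (g₂ : Matrix (Fin 3) (Fin 3) ℂ) ^ 6 = xx ^ 6 • 1 := by
    calc (g₂ : Matrix (Fin 3) (Fin 3) ℂ) ^ 6
        = ((g₂ : Matrix (Fin 3) (Fin 3) ℂ) ^ 2) ^ 3 := by rw [← pow_mul]
      _ = _ := by
          rw [h2, pow_succ, pow_two, mB xx yy hx hy, mC xx yy hx hy, smul3]
  have h18 : g₂ ^ 18 = 1 := by
    apply Units.ext
    rw [Units.val_pow_eq_pow_val, Units.val_one,
      show (18:ℕ) = 6 * 3 from rfl, pow_mul, h6, smul_pow, one_pow, ← pow_mul,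
      show (6 * 3 : ℕ) = 9 * 2 from rfl, pow_mul, hx]
    norm_num
  have e1 : g₁ * g₂ ^ 2 * g₁⁻¹ = (MulAut.conj g₁) (g₂ ^ 2) := rfl
  have h9 : (g₁ * g₂ ^ 2 * g₁⁻¹) ^ 9 = 1 := by
    rw [e1, ← map_pow, ← pow_mul, show (2 * 9 : ℕ) = 18 from rfl, h18, _root_.map_one]
  have h3 : ¬(g₁ * g₂ ^ 2 * g₁⁻¹) ^ 3 = 1 := by
    intro h
    rw [e1, ← map_pow, ← pow_mul] at h
    have h1 : g₂ ^ (2 * 3) = 1 :=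
      (MulAut.conj g₁).injective (by rw [h, _root_.map_one])
    have h6' : (g₂ : Matrix (Fin 3) (Fin 3) ℂ) ^ 6 = 1 := by
      have := congrArg Units.val h1
      rwa [Units.val_pow_eq_pow_val, Units.val_one, show (2 * 3 : ℕ) = 6 from rfl] at this
    rw [h6] at h6'
    have h00 : (xx ^ 6 • (1 : Matrix (Fin 3) (Fin 3) ℂ)) 0 0
        = (1 : Matrix (Fin 3) (Fin 3) ℂ) 0 0 := by rw [h6']
    simp at h00
    exact hxx6 h00
  constructor
  · have ho := orderOf_eq_prime_pow (p := 3) (n := 1) (x := g₁ * g₂ ^ 2 * g₁⁻¹)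
      (by simpa using h3) (by simpa using h9)
    exact ho.trans (by norm_num)
  · have hGH : G₂ * !![(1/2) * xx ^ 5, (-1/2) * xx ^ 2 * yy ^ 1, (-1/2) * xx ^ 5; (-1/2) * xx ^ 2 * yy ^ 1, 0, (-1/2) * xx ^ 2 * yy ^ 1; (-1/2) * xx ^ 5, (-1/2) * xx ^ 2 * yy ^ 1, (1/2) * xx ^ 5] = 1 := by
      rw [hG2e, mD xx yy hx hy]
      exact Matrix.one_fin_three.symm
    have hinv : ((g₂⁻¹ : GL (Fin 3) ℂ) : Matrix (Fin 3) (Fin 3) ℂ) = !![(1/2) * xx ^ 5, (-1/2) * xx ^ 2 * yy ^ 1, (-1/2) * xx ^ 5; (-1/2) * xx ^ 2 * yy ^ 1, 0, (-1/2) * xx ^ 2 * yy ^ 1; (-1/2) * xx ^ 5, (-1/2) * xx ^ 2 * yy ^ 1, (1/2) * xx ^ 5] := by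
      calc ((g₂⁻¹ : GL (Fin 3) ℂ) : Matrix (Fin 3) (Fin 3) ℂ)
          = ↑(g₂⁻¹) * ((g₂ : Matrix (Fin 3) (Fin 3) ℂ) * !![(1/2) * xx ^ 5, (-1/2) * xx ^ 2 * yy ^ 1, (-1/2) * xx ^ 5; (-1/2) * xx ^ 2 * yy ^ 1, 0, (-1/2) * xx ^ 2 * yy ^ 1; (-1/2) * xx ^ 5, (-1/2) * xx ^ 2 * yy ^ 1, (1/2) * xx ^ 5]) := by
            rw [hg₂, hGH, mul_one]
        _ = (↑(g₂⁻¹) * ↑g₂) * !![(1/2) * xx ^ 5, (-1/2) * xx ^ 2 * yy ^ 1, (-1/2) * xx ^ 5; (-1/2) * xx ^ 2 * yy ^ 1, 0, (-1/2) * xx ^ 2 * yy ^ 1; (-1/2) * xx ^ 5, (-1/2) * xx ^ 2 * yy ^ 1, (1/2) * xx ^ 5] := (mul_assoc _ _ _).symm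
        _ = _ := by rw [← Units.val_mul, inv_mul_cancel, Units.val_one, one_mul]
    have hBv : ((g₁ * g₂⁻¹ ^ 2 * g₁ : GL (Fin 3) ℂ) : Matrix (Fin 3) (Fin 3) ℂ)
        = !![(1/2) + (1/2) * xx ^ 6, 0, (-1/2) + (1/2) * xx ^ 6; 0, (-1) * xx ^ 3, 0; (-1/2) + (1/2) * xx ^ 6, 0, (1/2) + (1/2) * xx ^ 6] := by
      rw [Units.val_mul, Units.val_mul, Units.val_pow_eq_pow_val, hinv, hg₁, hG1e, sq,
        mE xx yy hx hy, mF xx yy hx hy, mG xx yy hx hy]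
    have hB3 : (g₁ * g₂⁻¹ ^ 2 * g₁) ^ 3 = 1 := by
      apply Units.ext
      rw [Units.val_pow_eq_pow_val, Units.val_one, hBv, pow_succ, pow_two,
        mH xx yy hx hy, mI xx yy hx hy]
      exact Matrix.one_fin_three.symm
    have hBne : g₁ * g₂⁻¹ ^ 2 * g₁ ≠ 1 := by
      intro h
      have h' : ((g₁ * g₂⁻¹ ^ 2 * g₁ : GL (Fin 3) ℂ) : Matrix (Fin 3) (Fin 3) ℂ) = 1 := by
        rw [h, Units.val_one]
      rw [hBv, Matrix.one_fin_three] at h'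
      have h02 : (!![(1/2) + (1/2) * xx ^ 6, 0, (-1/2) + (1/2) * xx ^ 6; 0, (-1) * xx ^ 3, 0; (-1/2) + (1/2) * xx ^ 6, 0, (1/2) + (1/2) * xx ^ 6] : Matrix (Fin 3) (Fin 3) ℂ) 0 2
          = (!![1,0,0;0,1,0;0,0,1] : Matrix (Fin 3) (Fin 3) ℂ) 0 2 := by rw [h']
      simp at h02
      exact hxx6 (by linear_combination 2 * h02)
    exact orderOf_eq_prime hB3 hBne
end

section
/- The subgroup 𝒩 := ⟨A, B⟩ of GL(3,ℂ) generated by A := G₁·G₂²·G₁⁻¹ and B := G₁·G₂⁻²·G₁ is isomorphic as a group to (ℤ/9ℤ) × (ℤ/3ℤ). In particular 𝒩 is abelian of order 27. -/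
/-!
In the basis given by the columns of `P = !![1, 0, 1; 0, 1, 0; 1, 0, -1]` both `G₂²` and `G₁²` are
diagonal, and conjugation by the diagonal matrix `G₁` swaps the first and last eigenvalues. Hence,
with `ζ = e^{iπ/9}` a primitive 18th root of unity, `A` and `B = A⁻¹ G₁²` are `P`-diagonal with
eigenvalues `(ζ⁸, ζ¹⁴, ζ¹⁴)` and `(ζ⁶, ζ⁻⁶, 1)`. So `A^i B^j = 1` iff `9 ∣ i` and `3 ∣ j`, which
identifies `⟨A, B⟩` with `ℤ/9 × ℤ/3`.
-/

open Complex Matrix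

section ClosurePair

variable {G : Type*} [Group G]

noncomputable def zmodPowHom (a : G) (n : ℕ) (ha : a ^ (n : ℤ) = 1) :
    Multiplicative (ZMod n) →* G :=
  AddMonoidHom.toMultiplicativeLeft <|
    ZMod.lift n ⟨zmultiplesHom (Additive G) (.ofMul a), by
      simpa [← ofMul_zpow] using congrArg Additive.ofMul ha⟩

@[simp]
lemma zmodPowHom_ofAdd_intCast (a : G) (n : ℕ) (ha : a ^ (n : ℤ) = 1) (i : ℤ) :
    zmodPowHom a n ha (.ofAdd (i : ZMod n)) = a ^ i := by
  simp [zmodPowHom]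

lemma exists_zmodPowHom_eq_zpow (a : G) (n : ℕ) (ha : a ^ (n : ℤ) = 1)
    (x : Multiplicative (ZMod n)) : ∃ i : ℤ, zmodPowHom a n ha x = a ^ i := by
  obtain ⟨i, hi⟩ := ZMod.intCast_surjective x.toAdd
  exact ⟨i, by rw [← ofAdd_toAdd x, ← hi, zmodPowHom_ofAdd_intCast]⟩

lemma range_zmodPowHom (a : G) (n : ℕ) (ha : a ^ (n : ℤ) = 1) :
    (zmodPowHom a n ha).range = Subgroup.zpowers a := by
  ext x
  constructor
  · rintro ⟨y, rfl⟩
    obtain ⟨i, hi⟩ := exists_zmodPowHom_eq_zpow a n ha y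
    exact hi ▸ Subgroup.zpow_mem_zpowers a i
  · rintro ⟨i, rfl⟩
    exact ⟨.ofAdd (i : ZMod n), zmodPowHom_ofAdd_intCast a n ha i⟩

noncomputable def closurePairMulEquivZMod {a b : G} {m n : ℕ} (hab : Commute a b)
    (hker : ∀ i j : ℤ, a ^ i * b ^ j = 1 ↔ (m : ℤ) ∣ i ∧ (n : ℤ) ∣ j) :
    Subgroup.closure {a, b} ≃* Multiplicative (ZMod m) × Multiplicative (ZMod n) :=
  have ha : a ^ (m : ℤ) = 1 := by simpa using (hker m 0).2 ⟨dvd_rfl, dvd_zero _⟩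
  have hb : b ^ (n : ℤ) = 1 := by simpa using (hker 0 n).2 ⟨dvd_zero _, dvd_rfl⟩
  let φ := (zmodPowHom a m ha).noncommCoprod (zmodPowHom b n hb) fun x y => by
    obtain ⟨i, hi⟩ := exists_zmodPowHom_eq_zpow a m ha x
    obtain ⟨j, hj⟩ := exists_zmodPowHom_eq_zpow b n hb y
    exact hi ▸ hj ▸ hab.zpow_zpow i j
  have hφ : Function.Injective φ := by
    refine (injective_iff_map_eq_one φ).2 fun ⟨x, y⟩ h => ?_
    obtain ⟨i, rfl⟩ : ∃ i : ℤ, Multiplicative.ofAdd (i : ZMod m) = x :=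
      ZMod.intCast_surjective x.toAdd
    obtain ⟨j, rfl⟩ : ∃ j : ℤ, Multiplicative.ofAdd (j : ZMod n) = y :=
      ZMod.intCast_surjective y.toAdd
    obtain ⟨hi, hj⟩ := (hker i j).1 (by simpa [φ] using h)
    simp [Prod.ext_iff, ← ofAdd_zero, (ZMod.intCast_zmod_eq_zero_iff_dvd _ _).2, hi, hj]
  have hrange : φ.range = Subgroup.closure {a, b} := by
    rw [MonoidHom.noncommCoprod_range, range_zmodPowHom, range_zmodPowHom, Set.insert_eq,
      Subgroup.closure_union, Subgroup.zpowers_eq_closure, Subgroup.zpowers_eq_closure]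
  ((MonoidHom.ofInjective hφ).trans (MulEquiv.subgroupCongr hrange)).symm

lemma Subgroup.mul_comm_of_mulEquiv {H : Subgroup G} {C : Type*} [CommGroup C] (e : H ≃* C)
    {x y : G} (hx : x ∈ H) (hy : y ∈ H) : x * y = y * x :=
  congrArg Subtype.val (e.injective (by rw [map_mul e, map_mul e, mul_comm]) :
    (⟨x, hx⟩ * ⟨y, hy⟩ : H) = ⟨y, hy⟩ * ⟨x, hx⟩)

end ClosurePair

noncomputable def ζ : ℂˣ := Units.mk0 (exp (Real.pi * I / 9)) (exp_ne_zero _)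

lemma coe_ζ : (ζ : ℂ) = exp (Real.pi * I / 9) := rfl

lemma isPrimitiveRoot_ζ : IsPrimitiveRoot ζ 18 := by
  rw [← IsPrimitiveRoot.coe_units_iff, coe_ζ]
  convert isPrimitiveRoot_exp 18 (by norm_num) using 2
  push_cast
  ring

lemma coe_ζ_pow_eighteen : (ζ : ℂ) ^ 18 = 1 := by
  exact_mod_cast (IsPrimitiveRoot.coe_units_iff.2 isPrimitiveRoot_ζ).pow_eq_one

lemma conj_ζ : starRingEnd ℂ ζ = (ζ : ℂ)⁻¹ := by
  rw [coe_ζ, ← Complex.exp_conj, ← exp_neg]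
  congr 1
  simp only [map_div₀, map_mul, conj_ofReal, conj_I, mul_neg, map_ofNat]
  ring

lemma sq_t : t ^ 2 = ζ ^ 12 / 2 := by
  rw [t, coe_ζ, mul_pow, div_pow, ← ofReal_pow, Real.sq_sqrt zero_le_two, ← exp_nat_mul,
    ← exp_nat_mul]
  push_cast
  ring_nf

lemma pow_four_t : t ^ 4 = ζ ^ 6 / 4 := by
  rw [show t ^ 4 = (t ^ 2) ^ 2 by ring, sq_t]
  linear_combination (ζ : ℂ) ^ 6 / 4 * coe_ζ_pow_eighteen

lemma sq_conj_t : starRingEnd ℂ t ^ 2 = ζ ^ 6 / 2 := by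
  rw [← map_pow, sq_t, map_div₀, map_pow, conj_ζ, map_ofNat]
  field_simp
  linear_combination -coe_ζ_pow_eighteen

noncomputable def eigenbasis : GL (Fin 3) ℂ :=
  ⟨!![1, 0, 1; 0, 1, 0; 1, 0, -1], !![1/2, 0, 1/2; 0, 1, 0; 1/2, 0, -1/2],
    by rw [mul_fin_three, one_fin_three]; norm_num,
    by rw [mul_fin_three, one_fin_three]; norm_num⟩

noncomputable def diagonalInEigenbasis : (Fin 3 → ℂˣ) →* GL (Fin 3) ℂ :=
  (MulAut.conj eigenbasis).toMonoidHom.comp <|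
    (Units.map (diagonalRingHom (Fin 3) ℂ : (Fin 3 → ℂ) →* Matrix (Fin 3) (Fin 3) ℂ)).comp
      MulEquiv.piUnits.symm.toMonoidHom

lemma diagonalInEigenbasis_injective : Function.Injective diagonalInEigenbasis :=
  (MulAut.conj eigenbasis).injective.comp <|
    (Units.map_injective diagonal_injective).comp MulEquiv.piUnits.symm.injective

lemma coe_diagonalInEigenbasis (d : Fin 3 → ℂˣ) :
    (diagonalInEigenbasis d : Matrix (Fin 3) (Fin 3) ℂ) =
      !![1, 0, 1; 0, 1, 0; 1, 0, -1] * diagonal (fun i => (d i : ℂ)) *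
        !![1/2, 0, 1/2; 0, 1, 0; 1/2, 0, -1/2] := rfl

lemma G₁_eq : G₁ = !![(ζ : ℂ) ^ 7, 0, 0; 0, ζ ^ 13, 0; 0, 0, -ζ ^ 7] := by
  rw [G₁, ← coe_ζ, sq_t, sq_conj_t, diagonal_fin_three, smul_of]
  ext i j
  fin_cases i <;> fin_cases j <;> simp <;> ring

lemma G₁_mul_diagonalInEigenbasis (x y z : ℂˣ) :
    G₁ * diagonalInEigenbasis ![x, y, z] = diagonalInEigenbasis ![z, y, x] * G₁ := by
  rw [G₁_eq, coe_diagonalInEigenbasis, coe_diagonalInEigenbasis, diagonal_fin_three,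
    diagonal_fin_three]
  simp only [mul_fin_three]
  ext i j
  fin_cases i <;> fin_cases j <;> simp <;> ring

lemma G₂_sq : G₂ ^ 2 = diagonalInEigenbasis ![ζ ^ 14, ζ ^ 14, ζ ^ 8] := by
  rw [G₂, coe_diagonalInEigenbasis, ← coe_ζ, diagonal_fin_three]
  simp only [sq, smul_of, mul_fin_three]
  ext i j
  fin_cases i <;> fin_cases j <;> simp
  all_goals
    ring_nf
    simp only [pow_four_t, sq_t]
    ring

lemma G₁_sq : G₁ ^ 2 = diagonalInEigenbasis ![ζ ^ 14, ζ ^ 8, ζ ^ 14] := by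
  rw [G₁_eq, coe_diagonalInEigenbasis, diagonal_fin_three]
  simp only [sq, mul_fin_three]
  ext i j
  fin_cases i <;> fin_cases j <;> simp <;> ring_nf
  linear_combination (ζ : ℂ) ^ 8 * coe_ζ_pow_eighteen

lemma eigenvalues_zpow_mul_zpow_eq_one_iff (i j : ℤ) :
    ![ζ ^ 8, ζ ^ 14, ζ ^ 14] ^ i * (![ζ ^ 8, ζ ^ 14, ζ ^ 14]⁻¹ * ![ζ ^ 14, ζ ^ 8, ζ ^ 14]) ^ j = 1 ↔
      (9 : ℤ) ∣ i ∧ (3 : ℤ) ∣ j := by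
  simp only [funext_iff, Fin.forall_fin_succ, Pi.mul_apply, Pi.pow_apply, Pi.inv_apply,
    Pi.one_apply, cons_val_zero, cons_val_succ, cons_val_fin_one, forall_const, ← zpow_natCast, ← _root_.zpow_neg, ← _root_.zpow_mul,
    ← _root_.zpow_add, isPrimitiveRoot_ζ.zpow_eq_one_iff_dvd]
  omega

section GeneralLinear

variable {g₁ g₂ : GL (Fin 3) ℂ}

lemma conj_sq_eq_diagonalInEigenbasis (hg₁ : (g₁ : Matrix (Fin 3) (Fin 3) ℂ) = G₁)
    (hg₂ : (g₂ : Matrix (Fin 3) (Fin 3) ℂ) = G₂) :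
    g₁ * g₂ ^ 2 * g₁⁻¹ = diagonalInEigenbasis ![ζ ^ 8, ζ ^ 14, ζ ^ 14] := by
  rw [mul_inv_eq_iff_eq_mul]
  ext : 1
  simp only [Units.val_mul, Units.val_pow_eq_pow_val, hg₁, hg₂, G₂_sq,
    G₁_mul_diagonalInEigenbasis]

lemma sq_eq_diagonalInEigenbasis (hg₁ : (g₁ : Matrix (Fin 3) (Fin 3) ℂ) = G₁) :
    g₁ ^ 2 = diagonalInEigenbasis ![ζ ^ 14, ζ ^ 8, ζ ^ 14] := by
  ext : 1
  rw [Units.val_pow_eq_pow_val, hg₁, G₁_sq]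

end GeneralLinear

theorem stmt11 (g₁ g₂ : GL (Fin 3) ℂ)
    (hg₁ : (g₁ : Matrix (Fin 3) (Fin 3) ℂ) = G₁)
    (hg₂ : (g₂ : Matrix (Fin 3) (Fin 3) ℂ) = G₂) :
    Nonempty ((Subgroup.closure {g₁ * g₂ ^ 2 * g₁⁻¹, g₁ * g₂⁻¹ ^ 2 * g₁} : Subgroup (GL (Fin 3) ℂ))
        ≃* Multiplicative (ZMod 9) × Multiplicative (ZMod 3)) ∧
    (∀ x ∈ Subgroup.closure {g₁ * g₂ ^ 2 * g₁⁻¹, g₁ * g₂⁻¹ ^ 2 * g₁},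
      ∀ y ∈ Subgroup.closure {g₁ * g₂ ^ 2 * g₁⁻¹, g₁ * g₂⁻¹ ^ 2 * g₁}, x * y = y * x) ∧
    Nat.card (Subgroup.closure {g₁ * g₂ ^ 2 * g₁⁻¹, g₁ * g₂⁻¹ ^ 2 * g₁} : Subgroup (GL (Fin 3) ℂ))
      = 27 := by
  set α : Fin 3 → ℂˣ := ![ζ ^ 8, ζ ^ 14, ζ ^ 14]
  set β : Fin 3 → ℂˣ := α⁻¹ * ![ζ ^ 14, ζ ^ 8, ζ ^ 14]
  have ha : g₁ * g₂ ^ 2 * g₁⁻¹ = diagonalInEigenbasis α := conj_sq_eq_diagonalInEigenbasis hg₁ hg₂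
  have hb : g₁ * g₂⁻¹ ^ 2 * g₁ = diagonalInEigenbasis β := by
    rw [map_mul, map_inv, ← ha, ← sq_eq_diagonalInEigenbasis hg₁]
    group
  have hker (i j : ℤ) : diagonalInEigenbasis α ^ i * diagonalInEigenbasis β ^ j = 1 ↔
      ((9 : ℕ) : ℤ) ∣ i ∧ ((3 : ℕ) : ℤ) ∣ j := by
    rw [← map_zpow, ← map_zpow, ← map_mul,
      (injective_iff_map_eq_one' _).1 diagonalInEigenbasis_injective]
    exact eigenvalues_zpow_mul_zpow_eq_one_iff i j
  rw [ha, hb]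
  let e := closurePairMulEquivZMod ((Commute.all α β).map diagonalInEigenbasis) hker
  exact ⟨⟨e⟩, fun x hx y hy => Subgroup.mul_comm_of_mulEquiv e hx hy,
    by rw [Nat.card_congr e.toEquiv]; simp⟩
end

section
/- With A := G₁·G₂²·G₁⁻¹ and B := G₁·G₂⁻²·G₁, one has G₂·A·G₂⁻¹ = G₁² and G₁² = A·B. In particular G₂·A·G₂⁻¹ lies in the subgroup ⟨A, B⟩. -/
open Complex Matrix

private lemma key : G₂ * G₁ * (G₂ * G₂) = G₁ * G₁ * (G₂ * G₁) := by
  set s : ℂ := (Real.sqrt 2 : ℂ) with hsdef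
  set E : ℂ := Complex.exp (2 * (Real.pi : ℂ) * Complex.I / 3) with hEdef
  set c : ℂ := Complex.exp ((Real.pi : ℂ) * Complex.I / 9) with hcdef
  have hs : s ^ 2 = 2 := by
    rw [hsdef]; norm_cast; exact Real.sq_sqrt (by norm_num)
  have hE3 : E ^ 3 = 1 := by
    rw [hEdef, ← Complex.exp_nat_mul]
    push_cast
    rw [show (3 : ℂ) * (2 * (Real.pi : ℂ) * Complex.I / 3) = 2 * Real.pi * Complex.I by ring]
    exact_mod_cast Complex.exp_two_pi_mul_I
  have hEne : E ≠ 1 := by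
    intro h
    have h1 : E = Complex.exp ((2 * Real.pi / 3 : ℝ) * Complex.I) := by
      rw [hEdef]; norm_num; ring_nf
    have h2 : E.im = Real.sin (2 * Real.pi / 3) := by
      rw [h1]; exact Complex.exp_ofReal_mul_I_im _
    rw [h] at h2
    have : Real.sin (2 * Real.pi / 3) > 0 := by
      apply Real.sin_pos_of_pos_of_lt_pi <;> nlinarith [Real.pi_gt_three]
    simp at h2; linarith [h2 ▸ this]
  have hE2 : E ^ 2 + E + 1 = 0 := by
    have h0 : (E - 1) * (E ^ 2 + E + 1) = 0 := by linear_combination hE3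
    rcases mul_eq_zero.mp h0 with h | h
    · exact absurd (sub_eq_zero.mp h) hEne
    · exact h
  have ht : t = s / 2 * E := by rw [t, hsdef, hEdef]
  have hEne0 : E ≠ 0 := by rw [hEdef]; exact Complex.exp_ne_zero _
  have hEc : (starRingEnd ℂ) E = E ^ 2 := by
    have h1 : (starRingEnd ℂ) E * E = 1 := by
      rw [hEdef, ← Complex.exp_conj, ← Complex.exp_add]
      rw [show (starRingEnd ℂ) (2 * (Real.pi : ℂ) * Complex.I / 3) + 2 * (Real.pi : ℂ) * Complex.I / 3 = 0 by
        simp [map_div₀, Complex.conj_ofReal, map_ofNat]; ring]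
      exact Complex.exp_zero
    refine mul_right_cancel₀ hEne0 ?_
    rw [h1, ← hE3]; ring
  have hcs : (starRingEnd ℂ) s = s := by rw [hsdef]; exact Complex.conj_ofReal _
  have htb : (starRingEnd ℂ) t = s / 2 * E ^ 2 := by
    rw [t, ← hsdef, ← hEdef, _root_.map_mul, map_div₀, hcs, hEc, show (starRingEnd ℂ) (2:ℂ) = 2 from map_ofNat _ 2]
  have hG1 : G₁ = c • !![2 * (s / 2 * E ^ 2) ^ 2, 0, 0; 0, 2 * (s / 2 * E) ^ 2, 0;
      0, 0, -(2 * (s / 2 * E ^ 2) ^ 2)] := by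
    rw [G₁, htb, ht, ← hcdef]
    congr 1
    ext i j
    fin_cases i <;> fin_cases j <;> simp [Matrix.diagonal_apply, Matrix.vecHead, Matrix.vecTail]
  have hG2 : G₂ = c • !![(s / 2 * E) ^ 2, s / 2 * E, -(s / 2 * E) ^ 2;
      s / 2 * E, 0, s / 2 * E; -(s / 2 * E) ^ 2, s / 2 * E, (s / 2 * E) ^ 2] := by
    rw [G₂, ht, ← hcdef]
  have hM : !![(s / 2 * E) ^ 2, s / 2 * E, -(s / 2 * E) ^ 2;
      s / 2 * E, 0, s / 2 * E; -(s / 2 * E) ^ 2, s / 2 * E, (s / 2 * E) ^ 2] *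
      !![2 * (s / 2 * E ^ 2) ^ 2, 0, 0; 0, 2 * (s / 2 * E) ^ 2, 0;
      0, 0, -(2 * (s / 2 * E ^ 2) ^ 2)] *
      (!![(s / 2 * E) ^ 2, s / 2 * E, -(s / 2 * E) ^ 2;
      s / 2 * E, 0, s / 2 * E; -(s / 2 * E) ^ 2, s / 2 * E, (s / 2 * E) ^ 2] *
      !![(s / 2 * E) ^ 2, s / 2 * E, -(s / 2 * E) ^ 2;
      s / 2 * E, 0, s / 2 * E; -(s / 2 * E) ^ 2, s / 2 * E, (s / 2 * E) ^ 2]) =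
      !![2 * (s / 2 * E ^ 2) ^ 2, 0, 0; 0, 2 * (s / 2 * E) ^ 2, 0;
      0, 0, -(2 * (s / 2 * E ^ 2) ^ 2)] *
      !![2 * (s / 2 * E ^ 2) ^ 2, 0, 0; 0, 2 * (s / 2 * E) ^ 2, 0;
      0, 0, -(2 * (s / 2 * E ^ 2) ^ 2)] *
      (!![(s / 2 * E) ^ 2, s / 2 * E, -(s / 2 * E) ^ 2;
      s / 2 * E, 0, s / 2 * E; -(s / 2 * E) ^ 2, s / 2 * E, (s / 2 * E) ^ 2] *
      !![2 * (s / 2 * E ^ 2) ^ 2, 0, 0; 0, 2 * (s / 2 * E) ^ 2, 0;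
      0, 0, -(2 * (s / 2 * E ^ 2) ^ 2)]) := by
    simp only [Matrix.mul_fin_three]
    refine congrArg Matrix.of (Matrix.vec3_eq (Matrix.vec3_eq ?_ ?_ ?_)
      (Matrix.vec3_eq ?_ ?_ ?_) (Matrix.vec3_eq ?_ ?_ ?_))
    · linear_combination ((1/32 : ℂ) * s^6 + (1/32 : ℂ) * s^6 * E^1) * hs + ((1/16 : ℂ) * s^6 + (-1/16 : ℂ) * s^6 * E^2 + (1/16 : ℂ) * s^6 * E^3 + (-1/16 : ℂ) * s^6 * E^5 + (1/16 : ℂ) * s^6 * E^6 + (-1/32 : ℂ) * s^8 + (1/32 : ℂ) * s^8 * E^2 + (-1/32 : ℂ) * s^8 * E^3 + (1/32 : ℂ) * s^8 * E^5 + (-1/32 : ℂ) * s^8 * E^6 + (1/32 : ℂ) * s^8 * E^8 + (-1/32 : ℂ) * s^8 * E^9 + (1/32 : ℂ) * s^8 * E^11 + (-1/32 : ℂ) * s^8 * E^12) * hE2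
    · linear_combination ((1/16 : ℂ) * s^5 + (1/16 : ℂ) * s^5 * E^1) * hs + ((1/8 : ℂ) * s^5 + (-1/8 : ℂ) * s^5 * E^2 + (1/8 : ℂ) * s^5 * E^3 + (-1/16 : ℂ) * s^7 + (1/16 : ℂ) * s^7 * E^2 + (-1/16 : ℂ) * s^7 * E^3 + (1/16 : ℂ) * s^7 * E^5 + (-1/16 : ℂ) * s^7 * E^6 + (1/16 : ℂ) * s^7 * E^8 + (-1/16 : ℂ) * s^7 * E^9) * hE2
    · linear_combination ((1/32 : ℂ) * s^6 + (1/32 : ℂ) * s^6 * E^1) * hs + ((1/16 : ℂ) * s^6 + (-1/16 : ℂ) * s^6 * E^2 + (1/16 : ℂ) * s^6 * E^3 + (-1/16 : ℂ) * s^6 * E^5 + (1/16 : ℂ) * s^6 * E^6 + (-1/32 : ℂ) * s^8 + (1/32 : ℂ) * s^8 * E^2 + (-1/32 : ℂ) * s^8 * E^3 + (1/32 : ℂ) * s^8 * E^5 + (-1/32 : ℂ) * s^8 * E^6 + (1/32 : ℂ) * s^8 * E^8 + (-1/32 : ℂ) * s^8 * E^9 + (1/32 : ℂ) * s^8 * E^11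 + (-1/32 : ℂ) * s^8 * E^12) * hE2
    · ring
    · ring
    · ring
    · linear_combination ((-1/32 : ℂ) * s^6 + (-1/32 : ℂ) * s^6 * E^1) * hs + ((-1/16 : ℂ) * s^6 + (1/16 : ℂ) * s^6 * E^2 + (-1/16 : ℂ) * s^6 * E^3 + (1/16 : ℂ) * s^6 * E^5 + (-1/16 : ℂ) * s^6 * E^6 + (1/32 : ℂ) * s^8 + (-1/32 : ℂ) * s^8 * E^2 + (1/32 : ℂ) * s^8 * E^3 + (-1/32 : ℂ) * s^8 * E^5 + (1/32 : ℂ) * s^8 * E^6 + (-1/32 : ℂ) * s^8 * E^8 + (1/32 : ℂ) * s^8 * E^9 + (-1/32 : ℂ) * s^8 * E^11 + (1/32 : ℂ) * s^8 * E^12) * hE2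
    · linear_combination ((1/16 : ℂ) * s^5 + (1/16 : ℂ) * s^5 * E^1) * hs + ((1/8 : ℂ) * s^5 + (-1/8 : ℂ) * s^5 * E^2 + (1/8 : ℂ) * s^5 * E^3 + (-1/16 : ℂ) * s^7 + (1/16 : ℂ) * s^7 * E^2 + (-1/16 : ℂ) * s^7 * E^3 + (1/16 : ℂ) * s^7 * E^5 + (-1/16 : ℂ) * s^7 * E^6 + (1/16 : ℂ) * s^7 * E^8 + (-1/16 : ℂ) * s^7 * E^9) * hE2
    · linear_combination ((-1/32 : ℂ) * s^6 + (-1/32 : ℂ) * s^6 * E^1) * hs + ((-1/16 : ℂ) * s^6 + (1/16 : ℂ) * s^6 * E^2 + (-1/16 : ℂ) * s^6 * E^3 + (1/16 : ℂ) * s^6 * E^5 + (-1/16 : ℂ) * s^6 * E^6 + (1/32 : ℂ) * s^8 + (-1/32 : ℂ) * s^8 * E^2 + (1/32 : ℂ) * s^8 * E^3 + (-1/32 : ℂ) * s^8 * E^5 + (1/32 : ℂ) * s^8 * E^6 + (-1/32 : ℂ) * s^8 * E^8 + (1/32 : ℂ) * s^8 * E^9 + (-1/32 : ℂ) * s^8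 * E^11 + (1/32 : ℂ) * s^8 * E^12) * hE2
  rw [hG1, hG2]
  simp only [Matrix.smul_mul, Matrix.mul_smul, smul_smul]
  rw [hM]

theorem stmt13 (g₁ g₂ : GL (Fin 3) ℂ)
    (hg₁ : (g₁ : Matrix (Fin 3) (Fin 3) ℂ) = G₁)
    (hg₂ : (g₂ : Matrix (Fin 3) (Fin 3) ℂ) = G₂) :
    g₂ * (g₁ * g₂ ^ 2 * g₁⁻¹) * g₂⁻¹ = g₁ ^ 2 ∧
    g₁ ^ 2 = (g₁ * g₂ ^ 2 * g₁⁻¹) * (g₁ * g₂⁻¹ ^ 2 * g₁) ∧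
    g₂ * (g₁ * g₂ ^ 2 * g₁⁻¹) * g₂⁻¹ ∈
      Subgroup.closure {g₁ * g₂ ^ 2 * g₁⁻¹, g₁ * g₂⁻¹ ^ 2 * g₁} := by
  have h : g₂ * g₁ * g₂ ^ 2 = g₁ ^ 2 * (g₂ * g₁) := by
    apply Units.ext
    simp only [Units.val_mul, Units.val_pow_eq_pow_val, hg₁, hg₂, pow_two]
    exact key
  have h1 : g₂ * (g₁ * g₂ ^ 2 * g₁⁻¹) * g₂⁻¹ = g₁ ^ 2 := by
    have h2 : g₂ * (g₁ * g₂ ^ 2 * g₁⁻¹) * g₂⁻¹ = g₂ * g₁ * g₂ ^ 2 * (g₁⁻¹ * g₂⁻¹) := by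
      group
    rw [h2, h]
    group
  have h2 : g₁ ^ 2 = (g₁ * g₂ ^ 2 * g₁⁻¹) * (g₁ * g₂⁻¹ ^ 2 * g₁) := by group; exact sq g₁
  refine ⟨h1, h2, ?_⟩
  rw [h1, h2]
  exact Subgroup.mul_mem _ (Subgroup.subset_closure (by simp))
    (Subgroup.subset_closure (by simp))
end

section
/- The subgroup ℋ := ⟨T₁, T₃⟩ of GL(3,ℂ) generated by T₁ := G₁·G₂·G₁ and T₃ := diag(−1, −1, 1) is isomorphic as a group to the symmetric group S₃ on three letters; in particular ℋ has order 6 and its two elements of order 3 are T₁·T₃ and T₃·T₁. Moreover ℋ intersects the subgroup 𝒩 := ⟨G₁·G₂²·G₁⁻¹, G₁·G₂⁻²·G₁⟩ trivially: ℋ ∩ 𝒩 = {I}. -/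
open Complex Matrix

noncomputable def sc : ℂ := (Real.sqrt 2 : ℂ) / 2
noncomputable def w : ℂ := Complex.exp (2 * (Real.pi:ℂ) * Complex.I / 3)
noncomputable def aa : ℂ := Complex.exp ((Real.pi:ℂ) * Complex.I / 9)

lemma hs : sc^2 = 1/2 := by
  have h : (Real.sqrt 2 : ℂ)^2 = 2 := by norm_cast; rw [Real.sq_sqrt]; norm_num
  rw [sc, div_pow, h]; norm_num

lemma hsne : sc ≠ 0 := by
  rw [sc]
  have : (0:ℝ) < Real.sqrt 2 := Real.sqrt_pos.2 (by norm_num)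
  simp only [div_ne_zero_iff]
  constructor
  · norm_cast; positivity
  · norm_num

lemma hw3 : w^3 = 1 := by
  rw [w, ← Complex.exp_nat_mul]
  rw [show (3:ℕ) * (2 * (Real.pi:ℂ) * Complex.I / 3) = 2 * Real.pi * Complex.I by push_cast; ring]
  exact Complex.exp_two_pi_mul_I

lemma haw : aa^3 * w = -1 := by
  rw [w, aa, ← Complex.exp_nat_mul, ← Complex.exp_add]
  rw [show (3:ℕ) * ((Real.pi:ℂ) * Complex.I / 9) + 2 * Real.pi * Complex.I / 3 = Real.pi * Complex.I by push_cast; ring]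
  exact Complex.exp_pi_mul_I

lemma haw4 : aa^3 * w^4 = -1 := by linear_combination (w^3) * haw - hw3

lemma ha9 : aa^9 = -1 := by
  linear_combination (aa^6*w^2 - aa^3*w + 1) * haw - aa^9 * hw3

lemma ht_s17 : t = sc * w := rfl

lemma hwne : w ≠ 0 := Complex.exp_ne_zero _

lemma hconj : (starRingEnd ℂ) t = sc * w^2 := by
  have hcw : (starRingEnd ℂ) w * w = 1 := by
    rw [w, ← Complex.exp_conj, ← Complex.exp_add]
    rw [show (starRingEnd ℂ) (2 * (Real.pi:ℂ) * Complex.I / 3) + 2 * (Real.pi:ℂ) * Complex.I / 3 = 0 by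
      simp [map_div₀, _root_.map_mul, _root_.map_ofNat, Complex.conj_I, Complex.conj_ofReal]; ring]
    exact Complex.exp_zero
  have hcw2 : (starRingEnd ℂ) w = w^2 := by
    have h2 : w^2 * w = 1 := by linear_combination hw3
    field_simp at hcw h2 ⊢
    exact mul_right_cancel₀ hwne (hcw.trans h2.symm)
  have hcs : (starRingEnd ℂ) sc = sc := by
    rw [sc]; simp [map_div₀, Complex.conj_ofReal, _root_.map_ofNat]
  rw [ht_s17, _root_.map_mul, hcs, hcw2]

lemma hG1 : G₁ = aa • !![w, 0, 0; 0, w^2, 0; 0, 0, -w] := by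
  rw [G₁, show Complex.exp ((Real.pi : ℂ) * Complex.I / 9) = aa from rfl]
  congr 1
  have e1 : 2 * (starRingEnd ℂ t)^2 = w := by
    rw [hconj]; linear_combination (2*w^4) * hs + w * hw3
  have e2 : 2 * t^2 = w^2 := by rw [ht_s17]; linear_combination (2*w^2) * hs
  ext i j
  fin_cases i <;> fin_cases j <;>
    simp [Matrix.diagonal_apply, e1, e2] <;> try rfl

lemma hG2 : G₂ = aa • !![w^2/2, sc*w, -(w^2/2); sc*w, 0, sc*w; -(w^2/2), sc*w, w^2/2] := by
  rw [G₂, show Complex.exp ((Real.pi : ℂ) * Complex.I / 9) = aa from rfl]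
  congr 1
  have e2 : t^2 = w^2/2 := by rw [ht_s17]; linear_combination (w^2) * hs
  ext i j
  fin_cases i <;> fin_cases j <;> simp [ht_s17] <;>
    first | rfl | linear_combination (w^2) * hs

noncomputable def A : Matrix (Fin 3) (Fin 3) ℂ :=
  !![-(1/2), -sc, -(1/2); -sc, 0, sc; -(1/2), sc, -(1/2)]

noncomputable def B : Matrix (Fin 3) (Fin 3) ℂ := Matrix.diagonal ![-1, -1, 1]

lemma hB : B = !![-1,0,0;0,-1,0;0,0,1] := by
  ext i j; fin_cases i <;> fin_cases j <;> simp [B, Matrix.diagonal_apply] <;> rfl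

lemma hT1 : G₁ * G₂ * G₁ = A := by
  rw [hG1, hG2, A]
  ext i j
  fin_cases i <;> fin_cases j <;>
    simp [Matrix.mul_apply, Fin.sum_univ_three, Matrix.vecHead, Matrix.vecTail] <;>
    first
      | ring1
      | linear_combination (1/2) * haw4
      | linear_combination (-(1/2)) * haw4
      | linear_combination sc * haw4
      | linear_combination (-sc) * haw4

lemma hAA : A * A = 1 := by
  rw [A]
  ext i j
  fin_cases i <;> fin_cases j <;>
    simp [Matrix.mul_apply, Fin.sum_univ_three, Matrix.one_apply, Matrix.vecHead, Matrix.vecTail] <;>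
    first | ring1 | linear_combination hs | linear_combination -hs | linear_combination 2*hs | linear_combination -2*hs

lemma hBB : B * B = 1 := by
  rw [hB]
  ext i j
  fin_cases i <;> fin_cases j <;>
    simp [Matrix.mul_apply, Fin.sum_univ_three, Matrix.one_apply, Matrix.vecHead, Matrix.vecTail]

lemma hABA : A * B * A = B * A * B := by
  rw [hB, A]
  ext i j
  fin_cases i <;> fin_cases j <;>
    simp [Matrix.mul_apply, Fin.sum_univ_three, Matrix.vecHead, Matrix.vecTail] <;>
    first | ring1 | linear_combination hs | linear_combination -hs | linear_combination 2*hs | linear_combination -2*hs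

noncomputable def X1v : Matrix (Fin 3) (Fin 3) ℂ :=
  (-(aa^2*w)) • !![w^2, 0, 0; 0, w, 0; 0, 0, -(w^2)]

noncomputable def Yv : Matrix (Fin 3) (Fin 3) ℂ :=
  (-(aa^7)) • !![(w+w^2)/2, 0, -((w^2-w)/2); 0, w, 0; -((w^2-w)/2), 0, (w+w^2)/2]

lemma hG1invR : G₁ * X1v = 1 := by
  rw [hG1, X1v]
  ext i j
  fin_cases i <;> fin_cases j <;>
    simp [Matrix.mul_apply, Fin.sum_univ_three, Matrix.one_apply, Matrix.vecHead, Matrix.vecTail] <;>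
    first | ring1 | linear_combination haw4 | linear_combination -haw4

lemma hG22 : G₂ * G₂ = aa^2 • !![(w+w^2)/2, 0, (w^2-w)/2; 0, w^2, 0; (w^2-w)/2, 0, (w+w^2)/2] := by
  rw [hG2]
  ext i j
  fin_cases i <;> fin_cases j <;>
    simp [Matrix.mul_apply, Fin.sum_univ_three, Matrix.vecHead, Matrix.vecTail] <;>
    first
      | ring1
      | linear_combination (aa^2*w/2)*hw3 + (aa^2*w^2)*hs
      | linear_combination -((aa^2*w/2)*hw3 + (aa^2*w^2)*hs)
      | linear_combination (aa^2*w^2)*hs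
      | linear_combination -((aa^2*w^2)*hs)
      | linear_combination (aa^2*w^2)*hs - (aa^2*w/2)*hw3
      | linear_combination (aa^2*w/2)*hw3 - (aa^2*w^2)*hs
      | linear_combination 3*(aa^2*w^2)*hs - (aa^2*w/2)*hw3
      | linear_combination (aa^2*w/2)*hw3 - 3*(aa^2*w^2)*hs
      | linear_combination 3*(aa^2*w^2)*hs + (aa^2*w/2)*hw3
      | linear_combination -(3*(aa^2*w^2)*hs) - (aa^2*w/2)*hw3
      | linear_combination 5*(aa^2*w^2)*hs + (aa^2*w/2)*hw3
      | linear_combination -(5*(aa^2*w^2)*hs) - (aa^2*w/2)*hw3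
      | linear_combination 5*(aa^2*w^2)*hs - (aa^2*w/2)*hw3
      | linear_combination (aa^2*w/2)*hw3 - 5*(aa^2*w^2)*hs
      | (ring_nf; rw [hs]; linear_combination (aa^2*w/2)*hw3)
      | (ring_nf; rw [hs]; linear_combination -((aa^2*w/2)*hw3))
      | (ring_nf; rw [hs]; linear_combination (aa^2*w^2/2)*hw3)
      | (ring_nf; rw [hs]; linear_combination -((aa^2*w^2/2)*hw3))
      | (ring_nf; rw [hs]; ring1)

lemma hG22invR : (G₂ * G₂) * Yv = 1 := by
  rw [hG22, Yv]
  ext i j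
  fin_cases i <;> fin_cases j <;>
    simp [Matrix.mul_apply, Fin.sum_univ_three, Matrix.one_apply, Matrix.vecHead, Matrix.vecTail] <;>
    first
      | ring1
      | linear_combination (-(w^3))*ha9 + hw3
      | linear_combination (w^3)*ha9 - hw3
      | linear_combination (-(w^3))*ha9 + (aa^9)*hw3
      | linear_combination (w^3)*ha9 - (aa^9)*hw3

lemma hC1 : G₁ * (G₂ * G₂) * X1v =
    aa^2 • !![(w+w^2)/2, 0, (w-w^2)/2; 0, w^2, 0; (w-w^2)/2, 0, (w+w^2)/2] := by
  rw [hG1, hG22, X1v]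
  ext i j
  fin_cases i <;> fin_cases j <;>
    simp [Matrix.mul_apply, Fin.sum_univ_three, Matrix.vecHead, Matrix.vecTail] <;>
    first
      | ring1
      | linear_combination (aa^2*(w+w^2)/2)*haw4
      | linear_combination (-(aa^2*(w+w^2)/2))*haw4
      | linear_combination (aa^2*(w-w^2)/2)*haw4
      | linear_combination (-(aa^2*(w-w^2)/2))*haw4
      | linear_combination (aa^2*w^2)*haw4
      | linear_combination (-(aa^2*w^2))*haw4

lemma hC2 : G₁ * Yv * G₁ =
    !![(w+w^2)*w^2/2, 0, (w^2-w)*w^2/2; 0, w^2, 0; (w^2-w)*w^2/2, 0, (w+w^2)*w^2/2] := by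
  rw [hG1, Yv]
  ext i j
  fin_cases i <;> fin_cases j <;>
    simp [Matrix.mul_apply, Fin.sum_univ_three, Matrix.vecHead, Matrix.vecTail] <;>
    first
      | ring1
      | linear_combination (-(w^2*(w+w^2)/2))*ha9
      | linear_combination ((w^2*(w+w^2)/2))*ha9
      | linear_combination (-(w^2*(w^2-w)/2))*ha9
      | linear_combination ((w^2*(w^2-w)/2))*ha9
      | linear_combination (-(w^5))*ha9 + (w^2)*hw3
      | linear_combination (w^5)*ha9 - (w^2)*hw3

section Sthree

variable {G : Type*} [Group G]

/-- the six standard permutations -/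
def pa₁ : Equiv.Perm (Fin 3) := Equiv.swap 0 1
def pa₂ : Equiv.Perm (Fin 3) := Equiv.swap 1 2
def pa₃ : Equiv.Perm (Fin 3) := Equiv.swap 0 2
def pr : Equiv.Perm (Fin 3) := pa₁ * pa₂
def pr2 : Equiv.Perm (Fin 3) := pa₂ * pa₁

lemma perm_cases (σ : Equiv.Perm (Fin 3)) :
    σ = 1 ∨ σ = pa₁ ∨ σ = pa₂ ∨ σ = pa₃ ∨ σ = pr ∨ σ = pr2 := by
  revert σ; decide

def F (x y : G) : Equiv.Perm (Fin 3) → G := fun σ =>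
  if σ = pa₁ then x else if σ = pa₂ then y else if σ = pa₃ then x*y*x
  else if σ = pr then x*y else if σ = pr2 then y*x else 1

variable (x y : G)

lemma F_one : F x y 1 = 1 := by
  rw [F, if_neg (by decide), if_neg (by decide), if_neg (by decide), if_neg (by decide),
    if_neg (by decide)]

lemma F_a₁ : F x y pa₁ = x := by rw [F, if_pos rfl]

lemma F_a₂ : F x y pa₂ = y := by rw [F, if_neg (by decide), if_pos rfl]

lemma F_a₃ : F x y pa₃ = x*y*x := by
  rw [F, if_neg (by decide), if_neg (by decide), if_pos rfl]

lemma F_r : F x y pr = x*y := by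
  rw [F, if_neg (by decide), if_neg (by decide), if_neg (by decide), if_pos rfl]

lemma F_r2 : F x y pr2 = y*x := by
  rw [F, if_neg (by decide), if_neg (by decide), if_neg (by decide), if_neg (by decide),
    if_pos rfl]

variable {x y}
variable (hx : x*x = 1) (hy : y*y = 1) (hb : x*y*x = y*x*y)

include hx hy hb in
lemma F_mul : ∀ σ τ, F x y (σ * τ) = F x y σ * F x y τ := by
  have hx1 : ∀ z : G, x*(x*z) = z := fun z => by rw [← mul_assoc, hx, one_mul]
  have hy1 : ∀ z : G, y*(y*z) = z := fun z => by rw [← mul_assoc, hy, one_mul]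
  have hb' : y*(x*y) = x*(y*x) := by rw [← mul_assoc, ← mul_assoc, ← hb]
  have hb1 : ∀ z : G, y*(x*(y*z)) = x*(y*(x*z)) := fun z => by
    rw [← mul_assoc, ← mul_assoc, ← mul_assoc, ← mul_assoc, ← hb]
  intro σ τ
  rcases perm_cases σ with rfl|rfl|rfl|rfl|rfl|rfl <;>
    rcases perm_cases τ with rfl|rfl|rfl|rfl|rfl|rfl <;>
      simp only [F_one, F_a₁, F_a₂, F_a₃, F_r, F_r2] <;>
      simp (config := { decide := true }) only [F, if_true, if_false] <;>
      first
        | rfl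
        | simp only [mul_assoc, hx1, hy1, hb1, hb', hx, hy, one_mul, mul_one]

end Sthree

section Sthree2

variable {G : Type*} [Group G] {x y : G}

/-- the homomorphism from S₃ -/
def Fhom (hx : x*x = 1) (hy : y*y = 1) (hb : x*y*x = y*x*y) : Equiv.Perm (Fin 3) →* G :=
  { toFun := F x y, map_one' := F_one x y, map_mul' := F_mul hx hy hb }

variable (hx : x*x = 1) (hy : y*y = 1) (hb : x*y*x = y*x*y)

lemma Fhom_apply (σ) : Fhom hx hy hb σ = F x y σ := rfl

lemma Fhom_inj (hne1 : x ≠ 1) (hne2 : y ≠ 1) (hne3 : x*y ≠ 1) (hne4 : y*x ≠ 1)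
    (hne5 : x*y*x ≠ 1) : Function.Injective (Fhom hx hy hb) := by
  rw [injective_iff_map_eq_one]
  intro σ h
  rcases perm_cases σ with rfl|rfl|rfl|rfl|rfl|rfl <;>
    rw [Fhom_apply] at h <;>
    first
      | rfl
      | (rw [F_a₁] at h; exact absurd h hne1)
      | (rw [F_a₂] at h; exact absurd h hne2)
      | (rw [F_a₃] at h; exact absurd h hne5)
      | (rw [F_r] at h; exact absurd h hne3)
      | (rw [F_r2] at h; exact absurd h hne4)

lemma Fhom_range : (Fhom hx hy hb).range = Subgroup.closure {x, y} := by
  apply le_antisymm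
  · rintro g ⟨σ, rfl⟩
    have hx' : x ∈ Subgroup.closure {x, y} := Subgroup.subset_closure (by simp)
    have hy' : y ∈ Subgroup.closure {x, y} := Subgroup.subset_closure (by simp)
    rcases perm_cases σ with rfl|rfl|rfl|rfl|rfl|rfl <;>
      rw [Fhom_apply] <;>
      simp only [F_one, F_a₁, F_a₂, F_a₃, F_r, F_r2] <;>
      first
        | exact Subgroup.one_mem _
        | exact hx'
        | exact hy'
        | exact Subgroup.mul_mem _ (Subgroup.mul_mem _ hx' hy') hx'
        | exact Subgroup.mul_mem _ hx' hy'
        | exact Subgroup.mul_mem _ hy' hx'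
  · rw [Subgroup.closure_le]
    rintro g hg
    simp only [Set.mem_insert_iff, Set.mem_singleton_iff] at hg
    rcases hg with rfl | rfl
    · exact ⟨pa₁, by rw [Fhom_apply, F_a₁]⟩
    · exact ⟨pa₂, by rw [Fhom_apply, F_a₂]⟩

lemma order_pa₁ : orderOf pa₁ = 2 := orderOf_eq_prime (by decide) (by decide)
lemma order_pa₂ : orderOf pa₂ = 2 := orderOf_eq_prime (by decide) (by decide)
lemma order_pa₃ : orderOf pa₃ = 2 := orderOf_eq_prime (by decide) (by decide)
lemma order_pr : orderOf pr = 3 := by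
  haveI : Fact (Nat.Prime 3) := ⟨by norm_num⟩
  exact orderOf_eq_prime (by decide : pr ^ 3 = 1) (by decide)
lemma order_pr2 : orderOf pr2 = 3 := by
  haveI : Fact (Nat.Prime 3) := ⟨by norm_num⟩
  exact orderOf_eq_prime (by decide : pr2 ^ 3 = 1) (by decide)

end Sthree2

section PredSec

abbrev GL3 := GL (Fin 3) ℂ

def PredGL (v : GL3) : Prop :=
  (↑v : Matrix (Fin 3) (Fin 3) ℂ) 0 1 = 0 ∧ (↑v : Matrix (Fin 3) (Fin 3) ℂ) 1 0 = 0 ∧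
  (↑v : Matrix (Fin 3) (Fin 3) ℂ) 1 2 = 0 ∧ (↑v : Matrix (Fin 3) (Fin 3) ℂ) 2 1 = 0 ∧
  ((↑v : Matrix (Fin 3) (Fin 3) ℂ) 1 1)^9 = 1

lemma PredGL_one : PredGL 1 := by
  refine ⟨?_, ?_, ?_, ?_, ?_⟩ <;> simp [Matrix.one_apply]

lemma PredGL_mul {v u : GL3} (hv : PredGL v) (hu : PredGL u) : PredGL (v * u) := by
  obtain ⟨v1, v2, v3, v4, v5⟩ := hv
  obtain ⟨u1, u2, u3, u4, u5⟩ := hu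
  refine ⟨?_, ?_, ?_, ?_, ?_⟩ <;>
    simp only [Units.val_mul, Matrix.mul_apply, Fin.sum_univ_three, v1, v2, v3, v4, u1, u2, u3, u4,
      mul_zero, zero_mul, add_zero, zero_add]
  rw [mul_pow, v5, u5, one_mul]

lemma PredGL_inv {v : GL3} (hv : PredGL v) : PredGL v⁻¹ := by
  obtain ⟨v1, v2, v3, v4, v5⟩ := hv
  set M : Matrix (Fin 3) (Fin 3) ℂ := ↑v with hM
  set N : Matrix (Fin 3) (Fin 3) ℂ := ↑(v⁻¹) with hN
  have hne : M 1 1 ≠ 0 := by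
    intro h0; rw [h0] at v5; norm_num at v5
  have h1 : N * M = 1 := by
    rw [hM, hN, ← Units.val_mul, inv_mul_cancel, Units.val_one]
  have h2 : M * N = 1 := by
    rw [hM, hN, ← Units.val_mul, mul_inv_cancel, Units.val_one]
  have e01 : (N * M) 0 1 = (1 : Matrix (Fin 3) (Fin 3) ℂ) 0 1 := by rw [h1]
  have e21 : (N * M) 2 1 = (1 : Matrix (Fin 3) (Fin 3) ℂ) 2 1 := by rw [h1]
  have e10 : (M * N) 1 0 = (1 : Matrix (Fin 3) (Fin 3) ℂ) 1 0 := by rw [h2]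
  have e12 : (M * N) 1 2 = (1 : Matrix (Fin 3) (Fin 3) ℂ) 1 2 := by rw [h2]
  have e11 : (N * M) 1 1 = (1 : Matrix (Fin 3) (Fin 3) ℂ) 1 1 := by rw [h1]
  simp (config := { decide := true }) only [Matrix.mul_apply, Fin.sum_univ_three,
    Matrix.one_apply, v1, v2, v3, v4,
    mul_zero, zero_mul, add_zero, zero_add, if_true, if_false] at e01 e21 e10 e12 e11
  norm_num at e01 e21 e10 e12 e11
  refine ⟨?_, ?_, ?_, ?_, ?_⟩
  · exact e01.resolve_right hne
  · exact e10.resolve_left hne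
  · exact e12.resolve_left hne
  · exact e21.resolve_right hne
  · have h9 : (N 1 1 * M 1 1)^9 = 1 := by rw [e11]; norm_num
    rw [mul_pow, v5, mul_one] at h9
    exact h9

end PredSec

theorem stmt17 (g₁ g₂ t₃ : GL (Fin 3) ℂ)
    (hg₁ : (g₁ : Matrix (Fin 3) (Fin 3) ℂ) = G₁)
    (hg₂ : (g₂ : Matrix (Fin 3) (Fin 3) ℂ) = G₂)
    (ht₃ : (t₃ : Matrix (Fin 3) (Fin 3) ℂ) = Matrix.diagonal ![-1, -1, 1]) :
    Nonempty ((Subgroup.closure {g₁ * g₂ * g₁, t₃} : Subgroup (GL (Fin 3) ℂ))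
        ≃* Equiv.Perm (Fin 3)) ∧
    Nat.card (Subgroup.closure {g₁ * g₂ * g₁, t₃} : Subgroup (GL (Fin 3) ℂ)) = 6 ∧
    (∀ x ∈ Subgroup.closure {g₁ * g₂ * g₁, t₃},
      orderOf x = 3 ↔ (x = (g₁ * g₂ * g₁) * t₃ ∨ x = t₃ * (g₁ * g₂ * g₁))) ∧
    Subgroup.closure {g₁ * g₂ * g₁, t₃} ⊓
      Subgroup.closure {g₁ * g₂ ^ 2 * g₁⁻¹, g₁ * g₂⁻¹ ^ 2 * g₁} = ⊥ := by
  generalize hxdef : g₁ * g₂ * g₁ = x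
  -- entry lemmas
  have eA01 : A 0 1 = -sc := by rw [A]; simp
  have eB11 : B 1 1 = -1 := by rw [hB]; simp
  have eAB01 : (A*B) 0 1 = sc := by
    rw [A, hB]
    simp [Matrix.mul_apply, Fin.sum_univ_three, Matrix.vecHead, Matrix.vecTail]
  have eBA01 : (B*A) 0 1 = sc := by
    rw [A, hB]
    simp [Matrix.mul_apply, Fin.sum_univ_three, Matrix.vecHead, Matrix.vecTail]
  have eABA01 : (A*B*A) 0 1 = -sc := by
    rw [A, hB]
    simp [Matrix.mul_apply, Fin.sum_univ_three, Matrix.vecHead, Matrix.vecTail]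
    ring
  -- coe lemmas
  have cx : (↑x : Matrix (Fin 3) (Fin 3) ℂ) = A := by
    rw [← hxdef, Units.val_mul, Units.val_mul, hg₁, hg₂, hT1]
  have cy : (↑t₃ : Matrix (Fin 3) (Fin 3) ℂ) = B := by rw [ht₃, B]
  -- relations
  have uxx : x * x = 1 := by
    apply Units.ext
    rw [Units.val_mul, cx, Units.val_one, hAA]
  have uyy : t₃ * t₃ = 1 := by
    apply Units.ext
    rw [Units.val_mul, cy, Units.val_one, hBB]
  have ubr : x * t₃ * x = t₃ * x * t₃ := by
    apply Units.ext
    rw [Units.val_mul, Units.val_mul, Units.val_mul, Units.val_mul, cx, cy, hABA]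
  -- distinctness
  have hone01 : ((↑(1 : GL (Fin 3) ℂ) : Matrix (Fin 3) (Fin 3) ℂ)) 0 1 = 0 := by
    rw [Units.val_one]; simp [Matrix.one_apply]
  have hne1 : x ≠ 1 := by
    intro h
    have h2 := congrArg (fun u : GL (Fin 3) ℂ => (↑u : Matrix (Fin 3) (Fin 3) ℂ) 0 1) h
    simp only [cx, eA01, hone01] at h2
    exact hsne (neg_eq_zero.1 h2)
  have hne2 : t₃ ≠ 1 := by
    intro h
    have h2 := congrArg (fun u : GL (Fin 3) ℂ => (↑u : Matrix (Fin 3) (Fin 3) ℂ) 1 1) h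
    simp only [cy, eB11, Units.val_one] at h2
    simp [Matrix.one_apply] at h2
    norm_num at h2
  have hne3 : x * t₃ ≠ 1 := by
    intro h
    have h2 := congrArg (fun u : GL (Fin 3) ℂ => (↑u : Matrix (Fin 3) (Fin 3) ℂ) 0 1) h
    simp only [Units.val_mul, cx, cy] at h2
    rw [eAB01, hone01] at h2
    exact hsne h2
  have hne4 : t₃ * x ≠ 1 := by
    intro h
    have h2 := congrArg (fun u : GL (Fin 3) ℂ => (↑u : Matrix (Fin 3) (Fin 3) ℂ) 0 1) h
    simp only [Units.val_mul, cx, cy] at h2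
    rw [eBA01, hone01] at h2
    exact hsne h2
  have hne5 : x * t₃ * x ≠ 1 := by
    intro h
    have h2 := congrArg (fun u : GL (Fin 3) ℂ => (↑u : Matrix (Fin 3) (Fin 3) ℂ) 0 1) h
    simp only [Units.val_mul, cx, cy] at h2
    rw [eABA01, hone01] at h2
    exact hsne (neg_eq_zero.1 h2)
  have hinj : Function.Injective (Fhom uxx uyy ubr) :=
    Fhom_inj uxx uyy ubr hne1 hne2 hne3 hne4 hne5
  have hrange : (Fhom uxx uyy ubr).range = Subgroup.closure {x, t₃} :=
    Fhom_range uxx uyy ubr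
  have iso : (Subgroup.closure {x, t₃} : Subgroup (GL (Fin 3) ℂ)) ≃* Equiv.Perm (Fin 3) :=
    (MulEquiv.subgroupCongr hrange.symm).trans (MonoidHom.ofInjective hinj).symm
  refine ⟨⟨iso⟩, ?_, ?_, ?_⟩
  · rw [Nat.card_congr iso.toEquiv, Nat.card_eq_fintype_card, Fintype.card_perm]
    norm_num [Nat.factorial]
  · intro v hv
    rw [← hrange] at hv
    obtain ⟨σ, rfl⟩ := hv
    rw [orderOf_injective (Fhom uxx uyy ubr) hinj σ]
    rw [show x * t₃ = Fhom uxx uyy ubr pr from by rw [Fhom_apply, F_r],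
      show t₃ * x = Fhom uxx uyy ubr pr2 from by rw [Fhom_apply, F_r2],
      hinj.eq_iff, hinj.eq_iff]
    rcases perm_cases σ with rfl|rfl|rfl|rfl|rfl|rfl <;>
      simp only [orderOf_one, order_pa₁, order_pa₂, order_pa₃, order_pr, order_pr2] <;>
      decide
  · rw [eq_bot_iff]
    intro v hv
    rw [Subgroup.mem_inf] at hv
    obtain ⟨hvH, hvN⟩ := hv
    rw [Subgroup.mem_bot]
    -- PredGL holds on the second group
    have cg1inv : (↑(g₁⁻¹) : Matrix (Fin 3) (Fin 3) ℂ) = X1v :=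
      Units.inv_eq_of_mul_eq_one_right (by rw [hg₁]; exact hG1invR)
    have cgen1 : (↑(g₁ * g₂ ^ 2 * g₁⁻¹) : Matrix (Fin 3) (Fin 3) ℂ) =
        aa^2 • !![(w+w^2)/2, 0, (w-w^2)/2; 0, w^2, 0; (w-w^2)/2, 0, (w+w^2)/2] := by
      rw [Units.val_mul, Units.val_mul, Units.val_pow_eq_pow_val, hg₁, hg₂, cg1inv, pow_two,
        hC1]
    have hg2sq : (↑(g₂ ^ 2) : Matrix (Fin 3) (Fin 3) ℂ) = G₂ * G₂ := by
      rw [Units.val_pow_eq_pow_val, hg₂, pow_two]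
    have cg2inv : (↑(g₂⁻¹ ^ 2) : Matrix (Fin 3) (Fin 3) ℂ) = Yv := by
      rw [inv_pow]
      exact Units.inv_eq_of_mul_eq_one_right (by rw [hg2sq]; exact hG22invR)
    have cgen2 : (↑(g₁ * g₂⁻¹ ^ 2 * g₁) : Matrix (Fin 3) (Fin 3) ℂ) =
        !![(w+w^2)*w^2/2, 0, (w^2-w)*w^2/2; 0, w^2, 0;
           (w^2-w)*w^2/2, 0, (w+w^2)*w^2/2] := by
      rw [Units.val_mul, Units.val_mul, hg₁, cg2inv, hC2]
    have hgen1 : PredGL (g₁ * g₂ ^ 2 * g₁⁻¹) := by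
      refine ⟨?_, ?_, ?_, ?_, ?_⟩ <;> rw [cgen1] <;> simp <;>
        rw [show (aa^2*w^2)^9 = (aa^9)^2 * (w^3)^6 from by ring, ha9, hw3] <;> norm_num
    have hgen2 : PredGL (g₁ * g₂⁻¹ ^ 2 * g₁) := by
      refine ⟨?_, ?_, ?_, ?_, ?_⟩ <;> rw [cgen2] <;> simp <;>
        rw [show (w^2)^9 = (w^3)^6 from by ring, hw3] <;> norm_num
    have hP : PredGL v := by
      refine Subgroup.closure_induction ?_ PredGL_one ?_ ?_ hvN
      · rintro g hg
        simp only [Set.mem_insert_iff, Set.mem_singleton_iff] at hg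
        rcases hg with rfl | rfl
        · exact hgen1
        · exact hgen2
      · exact fun a b _ _ ha hb => PredGL_mul ha hb
      · exact fun a _ ha => PredGL_inv ha
    rw [← hrange] at hvH
    obtain ⟨σ, rfl⟩ := hvH
    rcases perm_cases σ with rfl|rfl|rfl|rfl|rfl|rfl
    · exact (Fhom uxx uyy ubr).map_one
    · exfalso
      have h01 := hP.1
      rw [Fhom_apply, F_a₁, cx, eA01] at h01
      exact hsne (neg_eq_zero.1 h01)
    · exfalso
      have h11 := hP.2.2.2.2
      rw [Fhom_apply, F_a₂, cy, eB11] at h11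
      norm_num at h11
    · exfalso
      have h01 := hP.1
      rw [Fhom_apply, F_a₃, Units.val_mul, Units.val_mul, cx, cy, eABA01] at h01
      exact hsne (neg_eq_zero.1 h01)
    · exfalso
      have h01 := hP.1
      rw [Fhom_apply, F_r, Units.val_mul, cx, cy, eAB01] at h01
      exact hsne h01
    · exfalso
      have h01 := hP.1
      rw [Fhom_apply, F_r2, Units.val_mul, cx, cy, eBA01] at h01
      exact hsne h01
end
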